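/- Let q ≥ 2 and ν0, ν1 ≥ 0, and define A(Q) = (ν0 + ν1|Q|)^{q−2} Q on d×d real matrices. Then there exists a constant C depending only on q, ν0, ν1 such that for all d×d matrices Q, P: |A(Q) − A(P)| ≤ C|Q − P|(1 + |Q|^{q−2} + |P|^{q−2}), where |·| denotes the Frobenius norm. -/
import Mathlib
set_option maxHeartbeats 1000000


noncomputable section

namespace NonNewtonian

abbrev Mat (d : ℕ) := Fin d → Fin d → ℝ

/-- Frobenius norm of a `d × d` matrix. -/
def frob {d : ℕ} (Q : Mat d) : ℝ := Real.sqrt (∑ i, ∑ j, (Q i j) ^ 2)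

/-- The power-law tensor `A(Q) = (ν0 + ν1|Q|)^{q-2} Q` (real power). -/
def Aten {d : ℕ} (ν0 ν1 q : ℝ) (Q : Mat d) : Mat d :=
  fun i j => (ν0 + ν1 * frob Q) ^ (q - 2) * Q i j

/-- Embedding of matrices into Euclidean space. -/
def emb {d : ℕ} (Q : Mat d) : EuclideanSpace ℝ (Fin d × Fin d) :=
  (WithLp.equiv 2 (Fin d × Fin d → ℝ)).symm (fun p => Q p.1 p.2)

lemma frob_eq_norm {d : ℕ} (Q : Mat d) : frob Q = ‖emb Q‖ := by
  rw [EuclideanSpace.norm_eq, frob, Fintype.sum_prod_type]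
  simp [emb, Real.norm_eq_abs, sq_abs]

lemma frob_nonneg {d : ℕ} (Q : Mat d) : 0 ≤ frob Q := Real.sqrt_nonneg _

lemma frob_add_le {d : ℕ} (X Y : Mat d) :
    frob (fun i j => X i j + Y i j) ≤ frob X + frob Y := by
  rw [frob_eq_norm, frob_eq_norm, frob_eq_norm]
  exact norm_add_le (emb X) (emb Y)

lemma frob_smul {d : ℕ} (c : ℝ) (X : Mat d) :
    frob (fun i j => c * X i j) = |c| * frob X := by
  rw [frob_eq_norm, frob_eq_norm]
  have : emb (fun i j => c * X i j) = c • emb X := rfl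
  rw [this, norm_smul, Real.norm_eq_abs]

lemma abs_frob_sub_frob_le {d : ℕ} (Q P : Mat d) :
    |frob Q - frob P| ≤ frob (fun i j => Q i j - P i j) := by
  rw [frob_eq_norm, frob_eq_norm, frob_eq_norm]
  have : emb (fun i j => Q i j - P i j) = emb Q - emb P := rfl
  rw [this]
  exact abs_norm_sub_norm_le _ _

/-- Key scalar inequality: for `0 ≤ a ≤ b` and `α ≥ 0`,
`(b^α - a^α) * b ≤ max 1 α * (b - a) * b^α`. -/
lemma key_ineq {α a b : ℝ} (hα : 0 ≤ α) (ha : 0 ≤ a) (hab : a ≤ b) :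
    (b ^ α - a ^ α) * b ≤ max 1 α * (b - a) * b ^ α := by
  have hb : 0 ≤ b := le_trans ha hab
  rcases eq_or_lt_of_le hb with hb0 | hb0
  · have ha0 : a = 0 := le_antisymm (hb0 ▸ hab) ha
    simp [← hb0, ha0]
  -- b > 0; set t = a / b ∈ [0,1]
  have ht0 : 0 ≤ a / b := div_nonneg ha hb
  have ht1 : a / b ≤ 1 := (div_le_one hb0).mpr hab
  have hpow : a ^ α = (a / b) ^ α * b ^ α := by
    rw [← Real.mul_rpow ht0 hb, div_mul_cancel₀ _ (ne_of_gt hb0)]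
  have hM1 : (1 : ℝ) ≤ max 1 α := le_max_left _ _
  have hbα : 0 ≤ b ^ α := Real.rpow_nonneg hb α
  -- suffices: 1 - t^α ≤ max 1 α * (1 - t)
  have hkey : 1 - (a / b) ^ α ≤ max 1 α * (1 - a / b) := by
    rcases le_total α 1 with hle | hge
    · rcases eq_or_lt_of_le ht0 with ht0' | ht0'
      · rcases eq_or_lt_of_le hα with hα0 | hα0
        · rw [← hα0]; simpa using ht1
        · rw [← ht0', Real.zero_rpow (ne_of_gt hα0)]
          nlinarith
      · have : (a / b) ^ (1 : ℝ) ≤ (a / b) ^ α :=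
          Real.rpow_le_rpow_of_exponent_ge ht0' ht1 hle
        rw [Real.rpow_one] at this
        nlinarith
    · have hber : 1 + α * (a / b - 1) ≤ (1 + (a / b - 1)) ^ α :=
        one_add_mul_self_le_rpow_one_add (by linarith) hge
      have : (1 : ℝ) + (a / b - 1) = a / b := by ring
      rw [this] at hber
      have hαmax : α ≤ max 1 α := le_max_right _ _
      nlinarith
  have := mul_le_mul_of_nonneg_right hkey hbα
  have hb' : b - a = (1 - a / b) * b := by field_simp
  calc (b ^ α - a ^ α) * b = (1 - (a / b) ^ α) * b ^ α * b := by rw [hpow]; ring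
    _ ≤ max 1 α * (1 - a / b) * b ^ α * b := by nlinarith
    _ = max 1 α * (b - a) * b ^ α := by rw [hb']; ring

/-- `(1 + r)^α ≤ 2^α * (1 + r^α)` for `r, α ≥ 0`. -/
lemma one_add_rpow_le {r α : ℝ} (hr : 0 ≤ r) (hα : 0 ≤ α) :
    (1 + r) ^ α ≤ 2 ^ α * (1 + r ^ α) := by
  have h2 : (0 : ℝ) ≤ 2 ^ α := Real.rpow_nonneg (by norm_num) α
  have hrα : 0 ≤ r ^ α := Real.rpow_nonneg hr α
  rcases le_total r 1 with h | h
  · calc (1 + r) ^ α ≤ 2 ^ α := Real.rpow_le_rpow (by linarith) (by linarith) hα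
      _ = 2 ^ α * 1 := by ring
      _ ≤ 2 ^ α * (1 + r ^ α) := by nlinarith
  · calc (1 + r) ^ α ≤ (2 * r) ^ α := Real.rpow_le_rpow (by linarith) (by linarith) hα
      _ = 2 ^ α * r ^ α := Real.mul_rpow (by norm_num) hr
      _ ≤ 2 ^ α * (1 + r ^ α) := by nlinarith

/-- **Growth estimate for the power-law tensor** (`q ≥ 2`):
`|A(Q) - A(P)| ≤ C |Q - P| (1 + |Q|^{q-2} + |P|^{q-2})` with `C = C(q, ν0, ν1)`. -/
theorem Aten_growth_estimate (d : ℕ) (q : ℝ) (hq : 2 ≤ q)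
    (ν0 ν1 : ℝ) (hν0 : 0 ≤ ν0) (hν1 : 0 ≤ ν1) :
    ∃ C : ℝ, 0 < C ∧ ∀ Q P : Mat d,
      frob (fun i j => Aten ν0 ν1 q Q i j - Aten ν0 ν1 q P i j)
        ≤ C * frob (fun i j => Q i j - P i j)
            * (1 + frob Q ^ (q - 2) + frob P ^ (q - 2)) := by
  set α := q - 2 with hαdef
  have hα : 0 ≤ α := by simp only [hαdef]; linarith
  set M := max 1 α with hMdef
  have hM1 : (1 : ℝ) ≤ M := le_max_left _ _
  set K := (2 * (ν0 + ν1)) ^ α with hKdef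
  have hK : 0 ≤ K := Real.rpow_nonneg (by linarith) α
  refine ⟨K * (1 + 2 * M) + 1, by nlinarith, fun Q P => ?_⟩
  set nQ := frob Q with hnQ
  set nP := frob P with hnP
  set D := frob (fun i j => Q i j - P i j) with hD
  have hnQ0 : 0 ≤ nQ := frob_nonneg Q
  have hnP0 : 0 ≤ nP := frob_nonneg P
  have hD0 : 0 ≤ D := frob_nonneg _
  set a := ν0 + ν1 * nQ with hadef
  set b := ν0 + ν1 * nP with hbdef
  have ha0 : 0 ≤ a := by positivity
  have hb0 : 0 ≤ b := by positivity
  have haα : 0 ≤ a ^ α := Real.rpow_nonneg ha0 α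
  have hbα : 0 ≤ b ^ α := Real.rpow_nonneg hb0 α
  have hdiff : |nQ - nP| ≤ D := abs_frob_sub_frob_le Q P
  -- bound a^α and b^α by K * (1 + n^α)
  have hbound : ∀ r : ℝ, 0 ≤ r → (ν0 + ν1 * r) ^ α ≤ K * (1 + r ^ α) := by
    intro r hr
    have h1 : ν0 + ν1 * r ≤ (ν0 + ν1) * (1 + r) := by nlinarith
    calc (ν0 + ν1 * r) ^ α ≤ ((ν0 + ν1) * (1 + r)) ^ α :=
          Real.rpow_le_rpow (by positivity) h1 hα
      _ = (ν0 + ν1) ^ α * (1 + r) ^ α := Real.mul_rpow (by linarith) (by linarith)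
      _ ≤ (ν0 + ν1) ^ α * (2 ^ α * (1 + r ^ α)) := by
          have := one_add_rpow_le hr hα
          have h0 : (0 : ℝ) ≤ (ν0 + ν1) ^ α := Real.rpow_nonneg (by linarith) α
          nlinarith
      _ = K * (1 + r ^ α) := by
          rw [hKdef, Real.mul_rpow (by norm_num) (by linarith)]; ring
  have haK : a ^ α ≤ K * (1 + nQ ^ α) := hbound nQ hnQ0
  have hbK : b ^ α ≤ K * (1 + nP ^ α) := hbound nP hnP0
  -- Step 1: triangle inequality decomposition
  have hsplit : frob (fun i j => Aten ν0 ν1 q Q i j - Aten ν0 ν1 q P i j)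
      ≤ a ^ α * D + |a ^ α - b ^ α| * nP := by
    have heq : (fun i j => Aten ν0 ν1 q Q i j - Aten ν0 ν1 q P i j)
        = (fun i j => a ^ α * (Q i j - P i j) + (a ^ α - b ^ α) * P i j) := by
      funext i j
      simp only [Aten, ← hadef, ← hbdef, ← hnQ, ← hnP, ← hαdef]
      ring
    rw [heq]
    calc frob (fun i j => a ^ α * (Q i j - P i j) + (a ^ α - b ^ α) * P i j)
        ≤ frob (fun i j => a ^ α * (Q i j - P i j))
          + frob (fun i j => (a ^ α - b ^ α) * P i j) :=
          frob_add_le _ _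
      _ = |a ^ α| * D + |a ^ α - b ^ α| * nP := by rw [frob_smul, frob_smul]
      _ = a ^ α * D + |a ^ α - b ^ α| * nP := by rw [abs_of_nonneg haα]
  -- Step 2: bound the second term
  have hstep2 : |a ^ α - b ^ α| * nP ≤ M * D * (a ^ α + b ^ α) := by
    rcases eq_or_lt_of_le hν1 with hν1' | hν1'
    · have : a = b := by rw [hadef, hbdef, ← hν1']; ring
      rw [this]
      simp only [sub_self, abs_zero, zero_mul]
      positivity
    · rcases le_total a b with hab | hab
      · have hmono : a ^ α ≤ b ^ α := Real.rpow_le_rpow ha0 hab hα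
        have habs : |a ^ α - b ^ α| = b ^ α - a ^ α := by
          rw [abs_sub_comm, abs_of_nonneg (by linarith)]
        have hkey := key_ineq hα ha0 hab
        have hPb : ν1 * nP ≤ b := by rw [hbdef]; linarith
        have hba : b - a = ν1 * (nP - nQ) := by rw [hadef, hbdef]; ring
        have hbaD : b - a ≤ ν1 * D := by
          rw [hba]
          have : nP - nQ ≤ |nQ - nP| := by rw [abs_sub_comm]; exact le_abs_self _
          nlinarith
        rw [habs]
        -- (b^α - a^α) * nP * ν1 ≤ (b^α - a^α) * b ≤ M (b-a) b^α ≤ M ν1 D b^α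
        have h1 : (b ^ α - a ^ α) * (ν1 * nP) ≤ (b ^ α - a ^ α) * b :=
          mul_le_mul_of_nonneg_left hPb (by linarith)
        have h2 : M * (b - a) * b ^ α ≤ M * (ν1 * D) * b ^ α := by
          have : M * (b - a) ≤ M * (ν1 * D) := mul_le_mul_of_nonneg_left hbaD (by linarith)
          exact mul_le_mul_of_nonneg_right this hbα
        have h3 : (b ^ α - a ^ α) * nP * ν1 ≤ M * D * b ^ α * ν1 := by nlinarith
        have h4 : (b ^ α - a ^ α) * nP ≤ M * D * b ^ α :=
          le_of_mul_le_mul_right (by nlinarith) hν1'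
        have h5 : 0 ≤ M * D * a ^ α :=
          mul_nonneg (mul_nonneg (by linarith) hD0) haα
        linarith
      · have hmono : b ^ α ≤ a ^ α := Real.rpow_le_rpow hb0 hab hα
        have habs : |a ^ α - b ^ α| = a ^ α - b ^ α := abs_of_nonneg (by linarith)
        have hkey := key_ineq hα hb0 hab
        have hPa : ν1 * nP ≤ a := by
          have : b ≤ a := hab
          rw [hadef]; rw [hbdef] at this; linarith
        have hbaD : a - b ≤ ν1 * D := by
          have hba : a - b = ν1 * (nQ - nP) := by rw [hadef, hbdef]; ring
          rw [hba]
          have : nQ - nP ≤ |nQ - nP| := le_abs_self _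
          nlinarith
        rw [habs]
        have h1 : (a ^ α - b ^ α) * (ν1 * nP) ≤ (a ^ α - b ^ α) * a :=
          mul_le_mul_of_nonneg_left hPa (by linarith)
        have h2 : M * (a - b) * a ^ α ≤ M * (ν1 * D) * a ^ α := by
          have : M * (a - b) ≤ M * (ν1 * D) := mul_le_mul_of_nonneg_left hbaD (by linarith)
          exact mul_le_mul_of_nonneg_right this haα
        have h4 : (a ^ α - b ^ α) * nP ≤ M * D * a ^ α :=
          le_of_mul_le_mul_right (by nlinarith) hν1'
        have h5 : 0 ≤ M * D * b ^ α :=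
          mul_nonneg (mul_nonneg (by linarith) hD0) hbα
        linarith
  -- Final arithmetic
  have hxα : 0 ≤ nQ ^ α := Real.rpow_nonneg hnQ0 α
  have hyα : 0 ≤ nP ^ α := Real.rpow_nonneg hnP0 α
  have hDK1 : a ^ α * D ≤ K * (1 + nQ ^ α) * D := mul_le_mul_of_nonneg_right haK hD0
  have hDK2 : M * D * (a ^ α + b ^ α)
      ≤ M * D * (K * (1 + nQ ^ α) + K * (1 + nP ^ α)) := by
    have : a ^ α + b ^ α ≤ K * (1 + nQ ^ α) + K * (1 + nP ^ α) := by linarith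
    exact mul_le_mul_of_nonneg_left this (by positivity)
  calc frob (fun i j => Aten ν0 ν1 q Q i j - Aten ν0 ν1 q P i j)
      ≤ a ^ α * D + |a ^ α - b ^ α| * nP := hsplit
    _ ≤ K * (1 + nQ ^ α) * D + M * D * (K * (1 + nQ ^ α) + K * (1 + nP ^ α)) := by
        linarith
    _ ≤ (K * (1 + 2 * M) + 1) * D * (1 + nQ ^ α + nP ^ α) := by
        have hM0 : (0 : ℝ) ≤ M := by linarith
        have e1 : 0 ≤ K * D * nP ^ α := mul_nonneg (mul_nonneg hK hD0) hyα
        have e2 : 0 ≤ K * M * D * nQ ^ α :=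
          mul_nonneg (mul_nonneg (mul_nonneg hK hM0) hD0) hxα
        have e3 : 0 ≤ K * M * D * nP ^ α :=
          mul_nonneg (mul_nonneg (mul_nonneg hK hM0) hD0) hyα
        have e4 : 0 ≤ D * nQ ^ α := mul_nonneg hD0 hxα
        have e5 : 0 ≤ D * nP ^ α := mul_nonneg hD0 hyα
        nlinarith [e1, e2, e3, e4, e5, hD0]
  
end NonNewtonian
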